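/- Let K be a simplicial complex on vertex set [m] and let ω₁,...,ω_l be minimal non-faces of K (subsets not in K all of whose proper subsets are in K) with ω₁ ∪ ... ∪ ω_l = [m]. Then m − s(K) ≤ Σᵢ (|ωᵢ| − 1), where s(K) is the maximal s such that there is a map from [m] to Z^{m−s} sending the vertices of each maximal simplex to a set of vectors extending to a basis of Z^{m−s}. -/

import Mathlib

/-!
For every vertex `v` fix one `ωᵢ ∋ v`, and in each `ωᵢ` fix a vertex `aᵢ`. In the block
`ℤ^(ωᵢ \ {aᵢ})` send `v` to the standard vector `e_v`, or to the all-ones vector if `v = aᵢ`, and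
put the blocks side by side in `ℤ^(∑ (|ωᵢ| - 1))`. A face `F` contains no `ωᵢ`, so in every block
it misses some `uᵢ ∈ ωᵢ`; the vectors of the vertices of `ωᵢ \ {uᵢ}` form a basis of the block (a
transvection carries the standard basis onto them). Hence the vertices of `F` go to part of a
basis, and `m - ∑ (|ωᵢ| - 1)` is admissible in the definition of `s(K)`.
-/

def IsPartOfBasis (R : Type) [Semiring R] {M : Type} [AddCommMonoid M] [Module R M]
    {ι : Type} (v : ι → M) : Prop :=
  ∃ (κ : Type) (b : Module.Basis (ι ⊕ κ) R M), ∀ i, b (Sum.inl i) = v i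

open Finset

theorem Module.Basis.isPartOfBasis_comp {R M ι β : Type} [Semiring R] [AddCommMonoid M]
    [Module R M] (b : Module.Basis β R M) {f : ι → β} (hf : Function.Injective f) :
    IsPartOfBasis R (b ∘ f) := by
  classical
  refine ⟨↥(Set.range f)ᶜ,
    b.reindex (((Equiv.ofInjective f hf).sumCongr (Equiv.refl _)).trans
      (Equiv.Set.sumCompl (Set.range f))).symm, fun i => ?_⟩
  simp [Module.Basis.reindex_apply]

namespace IsPartOfBasis

variable {R M N ι ι' : Type} [Semiring R] [AddCommMonoid M] [Module R M]
  [AddCommMonoid N] [Module R N] {v : ι → M}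

theorem of_basis (b : Module.Basis ι R M) : IsPartOfBasis R b :=
  b.isPartOfBasis_comp Function.injective_id

theorem comp (h : IsPartOfBasis R v) {f : ι' → ι} (hf : Function.Injective f) :
    IsPartOfBasis R (v ∘ f) := by
  obtain ⟨κ, b, hb⟩ := h
  convert b.isPartOfBasis_comp (Sum.inl_injective.comp hf) using 1
  exact funext fun i => (hb (f i)).symm

theorem map (h : IsPartOfBasis R v) (e : M ≃ₗ[R] N) : IsPartOfBasis R (e ∘ v) := by
  obtain ⟨κ, b, hb⟩ := h
  exact ⟨κ, b.map e, fun i => by simp [hb]⟩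

theorem pi_single {η : Type} [Fintype η] [DecidableEq η] {ιs Ms : η → Type}
    [∀ i, AddCommMonoid (Ms i)] [∀ i, Module R (Ms i)] {v : ∀ i, ιs i → Ms i}
    (h : ∀ i, IsPartOfBasis R (v i)) :
    IsPartOfBasis R fun p : Σ i, ιs i => Pi.single p.1 (v p.1 p.2) := by
  choose κ b hb using h
  exact ⟨Σ i, κ i, (Pi.basis b).reindex (Equiv.sigmaSumDistrib ιs κ),
    fun ⟨i, j⟩ => by simp [Sigma.map, hb]⟩

end IsPartOfBasis

def standardBasisWithOnes (R : Type) [Semiring R] {α : Type} [DecidableEq α] (a₀ a : α) :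
    {x // x ≠ a₀} → R :=
  if h : a = a₀ then 1 else Pi.single ⟨a, h⟩ 1

theorem isPartOfBasis_standardBasisWithOnes (R : Type) [Ring R] {α : Type} [Finite α]
    [DecidableEq α] (a₀ a₁ : α) :
    IsPartOfBasis R fun a : {a // a ≠ a₁} => standardBasisWithOnes R a₀ a := by
  rcases eq_or_ne a₁ a₀ with rfl | h
  · convert IsPartOfBasis.of_basis (Pi.basisFun R {a // a ≠ a₁}) with a
    simp [standardBasisWithOnes, a.2]
  · let k : {x // x ≠ a₀} := ⟨a₁, h⟩
    -- `x ↦ x + x k • (1 - e_k)` fixes `e_x` for `x ≠ k` and sends `e_k` to the all-ones vector.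
    let t := LinearEquiv.transvection (v := 1 - Pi.single k 1)
      (f := (LinearMap.proj k : ({x // x ≠ a₀} → R) →ₗ[R] R)) (by simp)
    let e : {x // x ≠ a₀} ≃ {x // x ≠ a₁} :=
      (Equiv.swap a₀ a₁).subtypeEquiv fun x => by simp [Equiv.swap_apply_eq_iff]
    let b := ((Pi.basisFun R _).map t).reindex e
    have hb : ∀ a, b a = standardBasisWithOnes R a₀ a := by
      rintro ⟨a, ha⟩
      simp only [b, t, Module.Basis.reindex_apply, Module.Basis.map_apply, Pi.basisFun_apply,
        LinearEquiv.transvection.apply, standardBasisWithOnes]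
      split_ifs with h0
      · subst h0
        simp [e, k]
      · simp [e, k, Equiv.swap_apply_of_ne_of_ne h0 ha, ha]
    have key := IsPartOfBasis.of_basis b
    rwa [show ⇑b = _ from funext hb] at key

theorem exists_isPartOfBasis_of_forall_not_subset (R : Type) [Ring R] {V η ι : Type} [Fintype η]
    [Fintype ι] (ω : η → Finset V) (hne : ∀ i, (ω i).Nonempty) (hcover : ∀ v, ∃ i, v ∈ ω i)
    (hcard : Fintype.card ι = ∑ i, (#(ω i) - 1)) :
    ∃ lam : V → ι → R, ∀ s : Set V, (∀ i, ¬ ↑(ω i) ⊆ s) → IsPartOfBasis R fun v : s => lam v := by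
  classical
  choose a ha using hne
  choose σ hσ using hcover
  let β i := {x : ω i // x ≠ ⟨a i, ha i⟩}
  have hβ : Fintype.card (Σ i, β i) = Fintype.card ι := by
    simp [β, hcard, Fintype.card_sigma, Fintype.card_subtype_compl]
  let e : ((i : η) → β i → R) ≃ₗ[R] (ι → R) :=
    (LinearEquiv.piCurry R fun _ _ => R).symm ≪≫ₗ
      LinearEquiv.funCongrLeft R R (Fintype.equivOfCardEq hβ.symm)
  refine ⟨fun v => e (Pi.single (σ v) (standardBasisWithOnes R _ ⟨v, hσ v⟩)), fun s hs => ?_⟩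
  have hout : ∀ i, ∃ u ∈ ω i, u ∉ s := fun i => by simpa [Set.subset_def] using hs i
  choose u hu hus using hout
  let g : s → Σ i, {x : ω i // x ≠ ⟨u i, hu i⟩} := fun v =>
    ⟨σ v, ⟨v, hσ v⟩, fun h => hus _ (congrArg Subtype.val h ▸ v.2)⟩
  have hg : Function.Injective g := fun v w h => Subtype.ext (congrArg (fun p => p.2.1.1) h)
  exact ((IsPartOfBasis.pi_single fun i =>
    isPartOfBasis_standardBasisWithOnes R (⟨a i, ha i⟩ : ω i) ⟨u i, hu i⟩).comp hg).map e

/-- If `K` is a simplicial complex on `[m]` and `ω₁, ..., ω_l` are minimal non-faces with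
`ω₁ ∪ ⋯ ∪ ω_l = [m]`, then `m − s(K) ≤ ∑ᵢ (|ωᵢ| − 1)`, where `s(K)` is the maximal
`s ≤ m` admitting `λ : [m] → ℤ^{m-s}` sending the vertices of each maximal simplex to a
family extending to a basis of `ℤ^{m-s}`. -/
theorem buchstaber_bound_from_minimal_nonfaces (m l : ℕ)
    (K : Finset (Finset (Fin m)))
    (hdown : ∀ S ∈ K, ∀ T ⊆ S, T ∈ K)
    (ω : Fin l → Finset (Fin m))
    (hmin : ∀ i, ω i ∉ K ∧ ∀ T ⊂ ω i, T ∈ K)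
    (hcover : Finset.univ.biUnion ω = Finset.univ) :
    m - sSup {s : ℕ | s ≤ m ∧ ∃ lam : Fin m → (Fin (m - s) → ℤ),
        ∀ F ∈ K, (∀ G ∈ K, F ⊆ G → F = G) →
          IsPartOfBasis ℤ (fun i : {x // x ∈ F} => lam i.1)} ≤
      ∑ i : Fin l, ((ω i).card - 1) := by
  set S := {s : ℕ | s ≤ m ∧ ∃ lam : Fin m → (Fin (m - s) → ℤ),
    ∀ F ∈ K, (∀ G ∈ K, F ⊆ G → F = G) → IsPartOfBasis ℤ (fun i : {x // x ∈ F} => lam i.1)}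
  set T := ∑ i : Fin l, ((ω i).card - 1)
  obtain hmT | hTm := le_total m T
  · exact (Nat.sub_le _ _).trans hmT
  suffices hT : m - T ∈ S from calc
    m - sSup S ≤ m - (m - T) := Nat.sub_le_sub_left (le_csSup ⟨m, fun s hs => hs.1⟩ hT) m
    _ = T := Nat.sub_sub_self hTm
  refine ⟨Nat.sub_le m T, ?_⟩
  by_cases hK : ∅ ∈ K
  · have hne i : (ω i).Nonempty := nonempty_iff_ne_empty.2 fun h => (hmin i).1 (h ▸ hK)
    have hcovered v : ∃ i, v ∈ ω i := by
      simpa using (hcover.symm ▸ mem_univ v : v ∈ univ.biUnion ω)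
    obtain ⟨lam, hlam⟩ := exists_isPartOfBasis_of_forall_not_subset ℤ ω hne hcovered
      (ι := Fin (m - (m - T))) (by simp [Nat.sub_sub_self hTm, T])
    exact ⟨lam, fun F hF _ => hlam F fun i hi => (hmin i).1 (hdown F hF _ (coe_subset.1 hi))⟩
  · exact ⟨0, fun F hF _ => absurd (hdown F hF ∅ (empty_subset F)) hK⟩
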